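/- If L is 1-homogenous to L' (same widths with identical total heights per width), then OPT_FSP(L) = OPT_FSP(L'). -/

import Mathlib

/-- A rectangle is a pair (width, height). A packing of list `L` into the
width-1 strip at height `H`: axis-parallel placements, no overlap. -/
structure StripPacking (L : List (ℝ × ℝ)) (H : ℝ) where
  pos : Fin L.length → ℝ × ℝ
  left : ∀ i, 0 ≤ (pos i).1
  right : ∀ i, (pos i).1 + (L.get i).1 ≤ 1
  bottom : ∀ i, 0 ≤ (pos i).2
  top : ∀ i, (pos i).2 + (L.get i).2 ≤ H
  disjoint : ∀ i j, i ≠ j →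
    (pos i).1 + (L.get i).1 ≤ (pos j).1 ∨ (pos j).1 + (L.get j).1 ≤ (pos i).1 ∨
    (pos i).2 + (L.get i).2 ≤ (pos j).2 ∨ (pos j).2 + (L.get j).2 ≤ (pos i).2

/-- `L'` is obtained from `L` by horizontal cuts: each rectangle `(w,h)` is
replaced by `(w,h₁),…,(w,h_k)` with `h = h₁+⋯+h_k`, all pieces positive. -/
def IsSubdivision (L L' : List (ℝ × ℝ)) : Prop :=
  ∃ css : List (List ℝ), css.length = L.length ∧
    (∀ p ∈ L.zip css, p.2.sum = p.1.2 ∧ ∀ hh ∈ p.2, 0 < hh) ∧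
    L' = (L.zip css).flatMap (fun p => p.2.map fun hh => (p.1.1, hh))

/-- Optimal fractional strip packing height of `L`. -/
noncomputable def OPTFSP (L : List (ℝ × ℝ)) : ℝ :=
  sInf {H | 0 ≤ H ∧ ∃ L', IsSubdivision L L' ∧ Nonempty (StripPacking L' H)}

/-- Total height of rectangles of width `w` in `L`. -/
noncomputable def heightAt (L : List (ℝ × ℝ)) (w : ℝ) : ℝ :=
  ((L.filter (fun R => R.1 = w)).map Prod.snd).sum

/-- `L` is `r`-homogenous to `L'`: both lists use widths from a common finite
set `W`, and for each `w ∈ W` the total height in `L` lies between the total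
height in `L'` and `r` times it. -/
def Homogenous (r : ℝ) (L L' : List (ℝ × ℝ)) : Prop :=
  ∃ W : Finset ℝ, (∀ R ∈ L, R.1 ∈ W) ∧ (∀ R ∈ L', R.1 ∈ W) ∧
    ∀ w ∈ W, heightAt L' w ≤ heightAt L w ∧ heightAt L w ≤ r * heightAt L' w

/-!
Two lists with the same total height in every width have a common refinement up to order:
cut the first rectangle `(w, h)` of one list and some rectangle `(w, k)` of the other down to
height `min h k`, put the remainder back and recurse. On the packing side, a packed rectangle
may be cut horizontally with the pieces stacked in its place, and a packing can be reindexed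
along a permutation. So a packing of a subdivision of `L'` yields one of a subdivision of `L`
at the same height and vice versa: the two sets of feasible heights, hence their infima, agree.
-/

open List

section

variable {H : ℝ} {L M : List (ℝ × ℝ)}

inductive Subdiv : List (ℝ × ℝ) → List (ℝ × ℝ) → Prop where
  | nil : Subdiv [] []
  | cons (w h : ℝ) (cs : List ℝ) {L M : List (ℝ × ℝ)} (hsum : cs.sum = h)
      (hpos : ∀ x ∈ cs, 0 < x) (hs : Subdiv L M) :
      Subdiv ((w, h) :: L) ((cs.map fun x => (w, x)) ++ M)

theorem Subdiv.cons_inv {w h : ℝ} (s : Subdiv ((w, h) :: L) M) :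
    ∃ (cs : List ℝ) (M' : List (ℝ × ℝ)), cs.sum = h ∧ (∀ x ∈ cs, 0 < x) ∧ Subdiv L M' ∧
      M = (cs.map fun x => (w, x)) ++ M' := by
  cases s with
  | cons _ _ cs hsum hpos hs => exact ⟨cs, _, hsum, hpos, hs, rfl⟩

theorem isSubdivision_iff_subdiv : IsSubdivision L M ↔ Subdiv L M := by
  induction L generalizing M with
  | nil =>
    constructor
    · rintro ⟨css, -, -, rfl⟩
      exact Subdiv.nil
    · rintro ⟨⟩
      exact ⟨[], rfl, by simp, rfl⟩
  | cons R L ih =>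
    obtain ⟨w, h⟩ := R
    constructor
    · rintro ⟨_ | ⟨cs, css⟩, hlen, hcond, rfl⟩
      · simp at hlen
      · simp only [zip_cons_cons, mem_cons, forall_eq_or_imp] at hcond
        exact Subdiv.cons w h cs hcond.1.1 hcond.1.2
          (ih.1 ⟨css, by simpa using hlen, hcond.2, rfl⟩)
    · intro s
      obtain ⟨cs, M', hsum, hpos, s', rfl⟩ := s.cons_inv
      obtain ⟨css, hlen, hcond, rfl⟩ := ih.2 s'
      refine ⟨cs :: css, by simp [hlen], ?_, by simp⟩
      simp only [zip_cons_cons, mem_cons, forall_eq_or_imp]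
      exact ⟨⟨hsum, hpos⟩, hcond⟩

theorem Subdiv.pos_of_mem (s : Subdiv L M) : ∀ R ∈ M, 0 < R.2 := by
  induction s with
  | nil => simp
  | cons w h cs hsum hpos _ ih =>
    simp only [mem_append, mem_map]
    rintro R (⟨x, hx, rfl⟩ | hR)
    exacts [hpos x hx, ih R hR]

theorem Subdiv.perm_left {L' : List (ℝ × ℝ)} (p : L ~ L') (s : Subdiv L M) :
    ∃ M', Subdiv L' M' ∧ M ~ M' := by
  induction p generalizing M with
  | nil => exact ⟨M, s, .refl _⟩
  | cons x _ ih =>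
    obtain ⟨w, h⟩ := x
    obtain ⟨cs, M₀, hsum, hpos, s₀, rfl⟩ := s.cons_inv
    obtain ⟨M₁, s₁, p₁⟩ := ih s₀
    exact ⟨_, .cons _ _ cs hsum hpos s₁, p₁.append_left _⟩
  | swap x y l =>
    obtain ⟨w₁, h₁⟩ := x
    obtain ⟨w₂, h₂⟩ := y
    obtain ⟨cy, M₀, hy, hposy, s₀, rfl⟩ := s.cons_inv
    obtain ⟨cx, M₁, hx, hposx, s₁, rfl⟩ := s₀.cons_inv
    exact ⟨_, .cons _ _ cx hx hposx (.cons _ _ cy hy hposy s₁), perm_append_comm_assoc _ _ _⟩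
  | trans _ _ ih₁ ih₂ =>
    obtain ⟨M₁, s₁, p₁⟩ := ih₁ s
    obtain ⟨M₂, s₂, p₂⟩ := ih₂ s₁
    exact ⟨M₂, s₂, p₁.trans p₂⟩

theorem heightAt_nil (w : ℝ) : heightAt [] w = 0 := rfl

theorem heightAt_cons (w h : ℝ) (L : List (ℝ × ℝ)) (w' : ℝ) :
    heightAt ((w, h) :: L) w' = (if w = w' then h else 0) + heightAt L w' := by
  unfold heightAt
  by_cases hw : w = w' <;> simp [hw]

theorem heightAt_append (L M : List (ℝ × ℝ)) (w : ℝ) :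
    heightAt (L ++ M) w = heightAt L w + heightAt M w := by
  simp [heightAt]

theorem heightAt_map_pair (cs : List ℝ) (w w' : ℝ) :
    heightAt (cs.map fun x => (w, x)) w' = if w = w' then cs.sum else 0 := by
  induction cs with
  | nil => simp [heightAt_nil]
  | cons c cs ih =>
    simp only [map_cons, heightAt_cons, ih, sum_cons]
    split_ifs <;> ring

theorem heightAt_perm (p : L ~ M) (w : ℝ) : heightAt L w = heightAt M w :=
  ((p.filter _).map _).sum_eq

theorem heightAt_nonneg (hL : ∀ R ∈ L, 0 ≤ R.2) (w : ℝ) : 0 ≤ heightAt L w :=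
  sum_nonneg (by simpa using fun x hx => hL (w, x) hx)

theorem heightAt_pos_of_mem (hL : ∀ R ∈ L, 0 < R.2) {w h : ℝ} (hR : (w, h) ∈ L) :
    0 < heightAt L w := by
  rw [heightAt_perm (perm_cons_erase hR), heightAt_cons, if_pos rfl]
  exact add_pos_of_pos_of_nonneg (hL _ hR)
    (heightAt_nonneg (fun R hR' => (hL R (mem_of_mem_erase hR')).le) w)

theorem eq_nil_of_heightAt_eq_zero (hL : ∀ R ∈ L, 0 < R.2) (h : ∀ w, heightAt L w = 0) :
    L = [] :=
  eq_nil_iff_forall_not_mem.2 fun R hR => (heightAt_pos_of_mem hL hR).ne' (h R.1)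

theorem exists_mem_of_heightAt_ne_zero {w : ℝ} (h : heightAt L w ≠ 0) : ∃ k, (w, k) ∈ L := by
  contrapose! h
  have : L.filter (fun R => R.1 = w) = [] :=
    filter_eq_nil_iff.2 fun R hR hRw => h R.2 (by simpa [← of_decide_eq_true hRw] using hR)
  simp [heightAt, this]

theorem Subdiv.heightAt_eq (s : Subdiv L M) (w : ℝ) : heightAt M w = heightAt L w := by
  induction s with
  | nil => rfl
  | cons w' h cs hsum _ _ ih => simp [heightAt_append, heightAt_cons, heightAt_map_pair, ih, hsum]

def Packable (H : ℝ) (L : List (ℝ × ℝ)) : Prop :=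
  Nonempty (StripPacking L H)

/-- The box of size `R` at position `p` and the box of size `S` at position `q` do not overlap,
in the form of `StripPacking.disjoint`. -/
def Separated (p R q S : ℝ × ℝ) : Prop :=
  p.1 + R.1 ≤ q.1 ∨ q.1 + S.1 ≤ p.1 ∨ p.2 + R.2 ≤ q.2 ∨ q.2 + S.2 ≤ p.2

def NestedIn (p R q S : ℝ × ℝ) : Prop :=
  p.1 = q.1 ∧ R.1 = S.1 ∧ q.2 ≤ p.2 ∧ p.2 + R.2 ≤ q.2 + S.2

theorem Separated.symm {p R q S : ℝ × ℝ} (h : Separated p R q S) : Separated q S p R := by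
  unfold Separated at *
  tauto

theorem Separated.of_nestedIn {p R q S p' R' : ℝ × ℝ} (h : Separated p R q S)
    (hp : NestedIn p' R' p R) : Separated p' R' q S := by
  obtain ⟨h₁, h₂, h₃, h₄⟩ := hp
  rcases h with h | h | h | h
  · exact Or.inl (by linarith)
  · exact Or.inr <| Or.inl (by linarith)
  · exact Or.inr <| Or.inr <| Or.inl (by linarith)
  · exact Or.inr <| Or.inr <| Or.inr (by linarith)

theorem StripPacking.packable_of_nestedIn (P : StripPacking L H)
    (f : Fin M.length → Fin L.length) (pos : Fin M.length → ℝ × ℝ)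
    (hnest : ∀ j, NestedIn (pos j) (M.get j) (P.pos (f j)) (L.get (f j)))
    (hsame : ∀ j j', f j = f j' → j ≠ j' → Separated (pos j) (M.get j) (pos j') (M.get j')) :
    Packable H M := by
  refine ⟨⟨pos, fun j => ?_, fun j => ?_, fun j => ?_, fun j => ?_, fun j j' hjj' => ?_⟩⟩
  · linarith [P.left (f j), (hnest j).1]
  · linarith [P.right (f j), (hnest j).1, (hnest j).2.1]
  · linarith [P.bottom (f j), (hnest j).2.2.1]
  · linarith [P.top (f j), (hnest j).2.2.2]
  · by_cases hf : f j = f j'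
    · exact hsame j j' hf hjj'
    · exact ((Separated.of_nestedIn (P.disjoint _ _ hf) (hnest j)).symm.of_nestedIn
        (hnest j')).symm

theorem Packable.of_subperm (h : M <+~ L) (hL : Packable H L) : Packable H M := by
  classical
  obtain ⟨P⟩ := hL
  refine P.packable_of_nestedIn h.idxInj (P.pos ∘ h.idxInj) (fun j => ?_)
    (fun j j' hf hne => absurd (h.idxInj_injective hf) hne)
  have hget : M.get j = L.get (h.idxInj j) := by simp
  exact ⟨rfl, by rw [hget], le_rfl, by rw [hget]; rfl⟩

theorem Packable.perm (p : L ~ M) (hL : Packable H L) : Packable H M :=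
  hL.of_subperm p.symm.subperm

theorem Packable.split_head {w a b : ℝ} (ha : 0 ≤ a) (hb : 0 ≤ b)
    (hP : Packable H ((w, a + b) :: L)) : Packable H ((w, a) :: (w, b) :: L) := by
  obtain ⟨P⟩ := hP
  refine P.packable_of_nestedIn (Fin.cons 0 (Fin.cons 0 Fin.succ))
    (Fin.cons (P.pos 0) (Fin.cons (P.pos 0 + (0, a)) (P.pos ∘ Fin.succ))) ?_ ?_
  · simp [Fin.forall_fin_succ, NestedIn, ha, hb, add_assoc]
  · simp [Fin.forall_fin_succ, Separated]

theorem Packable.cut_head {w : ℝ} {cs : List ℝ} (hcs : ∀ c ∈ cs, 0 ≤ c) :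
    ∀ {L : List (ℝ × ℝ)}, Packable H ((w, cs.sum) :: L) →
      Packable H ((cs.map fun x => (w, x)) ++ L) := by
  induction cs with
  | nil => exact fun hP => hP.of_subperm (sublist_cons_self _ _).subperm
  | cons c cs ih =>
    intro L hP
    rw [sum_cons] at hP
    have hc := hcs c mem_cons_self
    have hcs' : ∀ x ∈ cs, 0 ≤ x := fun x hx => hcs x (mem_cons_of_mem _ hx)
    have hsplit := (hP.split_head hc (sum_nonneg hcs')).perm (Perm.swap _ _ _)
    exact (ih hcs' hsplit).perm perm_middle

theorem Packable.of_subdiv_append (s : Subdiv L M) :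
    ∀ K, Packable H (L ++ K) → Packable H (M ++ K) := by
  induction s with
  | nil => exact fun _ hP => hP
  | cons w h cs hsum hpos _ ih =>
    intro K hP
    rw [← hsum, cons_append] at hP
    have hcut := (hP.cut_head fun c hc => (hpos c hc).le).perm (perm_append_comm_assoc _ _ _)
    simpa using (ih _ hcut).perm (perm_append_comm_assoc _ _ _).symm

theorem Packable.of_subdiv (s : Subdiv L M) (hP : Packable H L) : Packable H M := by
  simpa using Packable.of_subdiv_append s [] (by simpa using hP)

-- Pieces of a subdivision must have positive height, so a zero remainder is dropped.
noncomputable def leftover (w r : ℝ) : List (ℝ × ℝ) :=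
  if 0 < r then [(w, r)] else []

theorem pos_of_mem_leftover {w r : ℝ} {R : ℝ × ℝ} (hR : R ∈ leftover w r) : 0 < R.2 := by
  unfold leftover at hR
  split_ifs at hR with hr
  · simpa [mem_singleton.1 hR] using hr
  · simp at hR

theorem heightAt_leftover_sub_append {w h m : ℝ} (hmh : m ≤ h) (L : List (ℝ × ℝ)) (w' : ℝ) :
    heightAt (leftover w (h - m) ++ L) w' =
      heightAt ((w, h) :: L) w' - if w = w' then m else 0 := by
  rw [heightAt_append, heightAt_cons, leftover]
  split_ifs <;> simp only [heightAt_cons, heightAt_nil, if_true, if_false, *] <;> linarith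

theorem length_leftover_sub_min_add_le (w w' h k : ℝ) :
    (leftover w (h - min h k)).length + (leftover w' (k - min h k)).length ≤ 1 := by
  rcases min_choice h k with hm | hm <;>
    simp only [leftover, hm, sub_self, lt_irrefl, if_false] <;> split_ifs <;> simp

def Refines (A C : List (ℝ × ℝ)) : Prop :=
  ∃ A', Subdiv A A' ∧ A' ~ C

theorem Refines.perm_left {A A' C : List (ℝ × ℝ)} (p : A ~ A') (h : Refines A' C) :
    Refines A C := by
  obtain ⟨A₂, s, p₂⟩ := h
  obtain ⟨M, sM, pM⟩ := s.perm_left p.symm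
  exact ⟨M, sM, pM.symm.trans p₂⟩

theorem Refines.cons_of_leftover {w h m : ℝ} {A C : List (ℝ × ℝ)} (hm : 0 < m) (hmh : m ≤ h)
    (hA : Refines (leftover w (h - m) ++ A) C) : Refines ((w, h) :: A) ((w, m) :: C) := by
  obtain ⟨A₂, s, p⟩ := hA
  unfold leftover at s
  split_ifs at s
  · obtain ⟨cs, M, hsum, hcs, sM, rfl⟩ := s.cons_inv
    refine ⟨_, .cons w h (m :: cs) (by simp [hsum]) ?_ sM, p.cons _⟩
    simpa [hm] using hcs
  · have hhm : h = m := by linarith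
    exact ⟨_, by simpa using Subdiv.cons w h [m] (by simp [hhm]) (by simpa using hm) s, p.cons _⟩

theorem exists_common_refinement (A B : List (ℝ × ℝ)) (hA : ∀ R ∈ A, 0 < R.2)
    (hB : ∀ R ∈ B, 0 < R.2) (hAB : ∀ w, heightAt A w = heightAt B w) :
    ∃ C, Refines A C ∧ Refines B C := by
  match A, hA, hAB with
  | [], _, hAB =>
    obtain rfl := eq_nil_of_heightAt_eq_zero hB fun w => (hAB w).symm
    exact ⟨[], ⟨[], .nil, .nil⟩, ⟨[], .nil, .nil⟩⟩
  | (w, h) :: A', hA, hAB =>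
    obtain ⟨k, hk⟩ : ∃ k, (w, k) ∈ B := exists_mem_of_heightAt_ne_zero
      ((hAB w).symm.trans_ne (heightAt_pos_of_mem hA mem_cons_self).ne')
    -- Cut `(w, h)` and `(w, k)` down to their common height `m`; at most one remainder is left.
    set m := min h k
    have hm : 0 < m := lt_min (hA _ mem_cons_self) (hB _ hk)
    have hBk := perm_cons_erase hk
    obtain ⟨C, hAC, hBC⟩ := exists_common_refinement (leftover w (h - m) ++ A')
      (leftover w (k - m) ++ B.erase (w, k))
      (fun R hR => (mem_append.1 hR).elim pos_of_mem_leftover (hA R <| mem_cons_of_mem _ ·))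
      (fun R hR => (mem_append.1 hR).elim pos_of_mem_leftover (hB R <| mem_of_mem_erase ·))
      fun w' => by
        rw [heightAt_leftover_sub_append (min_le_left _ _),
          heightAt_leftover_sub_append (min_le_right _ _), hAB, heightAt_perm hBk]
    exact ⟨(w, m) :: C, hAC.cons_of_leftover hm (min_le_left _ _),
      .perm_left hBk (hBC.cons_of_leftover hm (min_le_right _ _))⟩
termination_by A.length + B.length
decreasing_by
  have := length_leftover_sub_min_add_le w w h k
  have := length_erase_of_mem hk
  have := length_pos_of_mem hk
  simp only [length_append, length_cons]
  omega

theorem exists_isSubdivision_packable {A B B' : List (ℝ × ℝ)} (hA : ∀ R ∈ A, 0 < R.2)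
    (hAB : ∀ w, heightAt A w = heightAt B w) (hB' : IsSubdivision B B') (hP : Packable H B') :
    ∃ A', IsSubdivision A A' ∧ Packable H A' := by
  rw [isSubdivision_iff_subdiv] at hB'
  obtain ⟨C, ⟨A₂, sA, pA⟩, ⟨B₂, sB, pB⟩⟩ := exists_common_refinement A B' hA hB'.pos_of_mem
    fun w => (hAB w).trans (hB'.heightAt_eq w).symm
  exact ⟨A₂, isSubdivision_iff_subdiv.2 sA, (hP.of_subdiv sB).perm (pB.trans pA.symm)⟩

theorem OPTFSP_eq_of_heightAt_eq {A B : List (ℝ × ℝ)} (hA : ∀ R ∈ A, 0 < R.2)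
    (hB : ∀ R ∈ B, 0 < R.2) (hAB : ∀ w, heightAt A w = heightAt B w) :
    OPTFSP A = OPTFSP B := by
  unfold OPTFSP
  congr 1
  ext H
  constructor
  · rintro ⟨hH, A', hA', hP⟩
    exact ⟨hH, exists_isSubdivision_packable hB (fun w => (hAB w).symm) hA' hP⟩
  · rintro ⟨hH, B', hB', hP⟩
    exact ⟨hH, exists_isSubdivision_packable hA hAB hB' hP⟩

theorem Homogenous.heightAt_eq (h : Homogenous 1 L M) (w : ℝ) :
    heightAt L w = heightAt M w := by
  obtain ⟨W, hL, hM, hW⟩ := h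
  by_cases hw : w ∈ W
  · obtain ⟨h₁, h₂⟩ := hW w hw
    linarith
  · have hzero {K : List (ℝ × ℝ)} (hK : ∀ R ∈ K, R.1 ∈ W) : heightAt K w = 0 := by
      by_contra hne
      obtain ⟨k, hk⟩ := exists_mem_of_heightAt_ne_zero hne
      exact hw (hK _ hk)
    rw [hzero hL, hzero hM]

end

/-- If `L` is `1`-homogenous to `L'` (same widths, identical total heights per
width), then `OPT_FSP(L) = OPT_FSP(L')`. -/
theorem fsp_one_homogenous (L L' : List (ℝ × ℝ))
    (hrect : ∀ R ∈ L, 0 < R.1 ∧ R.1 ≤ 1 ∧ 0 < R.2)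
    (hrect' : ∀ R ∈ L', 0 < R.1 ∧ R.1 ≤ 1 ∧ 0 < R.2)
    (hhom : Homogenous 1 L L') :
    OPTFSP L = OPTFSP L' :=
  OPTFSP_eq_of_heightAt_eq (fun R hR => (hrect R hR).2.2) (fun R hR => (hrect' R hR).2.2)
    hhom.heightAt_eq
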